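/- Let $u_{\mathcal{A}}$ be the equiangular vector of $X_{\mathcal{A}}$ with equiangular constant $A_{\mathcal{A}}$, and for any unit vector $u \in \mathrm{span}(X_{\mathcal{A}})$ let $\mu(\gamma) = \hat{\mu} + \gamma u$ and $S(\gamma) = \|y - \mu(\gamma)\|^2$, where $X_{\mathcal{A}}'(y - \hat{\mu}) = \hat{C}\mathbf{1}$ with $\hat{C} > 0$. Then $-S'(0) = 2\hat{C}\, (u_{\mathcal{A}}'u)/A_{\mathcal{A}}$, and consequently among all unit vectors $u \in \mathrm{span}(X_{\mathcal{A}})$ the instantaneous decrease $-S'(0)$ is maximized by $u = u_{\mathcal{A}}$, with maximal value $2\hat{C}/A_{\mathcal{A}}$. -/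

import Mathlib

/-!
Write `G = XᵀX` and `w = G⁻¹ 𝟙`. Every `u ∈ span X` is `X v`, and `Xᵀ (y - μ̂) = C 𝟙` turns the
slope `-S'(0) = 2 ⟪u, y - μ̂⟫` into `2 C ⟪𝟙, v⟫`, while the equiangular vector `u_A = A X w`
satisfies `Xᵀ u_A = A 𝟙`, hence `⟪u_A, X v⟫ = A ⟪𝟙, v⟫`. So `-S'(0) = 2 C ⟪u_A, u⟫ / A`, and as
`u_A` and `u` are unit vectors, `⟪u_A, u⟫ ≤ 1` with equality at `u = u_A`.
-/

open Matrix

section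
variable {m : Type*} [Fintype m]

theorem hasDerivAt_dotProduct_self_sub_smul (r u : m → ℝ) (t : ℝ) :
    HasDerivAt (fun γ : ℝ => (r - γ • u) ⬝ᵥ (r - γ • u)) (-(2 * (u ⬝ᵥ (r - t • u)))) t := by
  have hterm (i : m) : HasDerivAt (fun γ : ℝ => (r i - γ * u i) * (r i - γ * u i))
      (-(2 * (u i * (r i - t * u i)))) t := by
    have h := ((hasDerivAt_id' t).mul_const (u i)).const_sub (r i)
    exact (h.fun_mul h).congr_deriv (by ring)
  refine (HasDerivAt.fun_sum (u := Finset.univ) fun i _ => hterm i).congr_deriv ?_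
  simp [dotProduct, Finset.mul_sum]

theorem dotProduct_le_one_of_dotProduct_self_eq_one {a b : m → ℝ} (ha : a ⬝ᵥ a = 1)
    (hb : b ⬝ᵥ b = 1) : a ⬝ᵥ b ≤ 1 := by
  have h : 0 ≤ (a - b) ⬝ᵥ (a - b) := dotProduct_self_star_nonneg (a - b)
  simp only [sub_dotProduct, dotProduct_sub, ha, hb, dotProduct_comm b a] at h
  linarith

end

namespace Matrix

variable {m ι : Type*} [Fintype m] [Fintype ι] {X : Matrix m ι ℝ}

theorem posDef_transpose_mul_self (hX : LinearIndependent ℝ Xᵀ) : (Xᵀ * X).PosDef := by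
  simpa [conjTranspose_eq_transpose_of_trivial] using
    PosDef.conjTranspose_mul_self X (mulVec_injective_iff.mpr hX)

variable [DecidableEq ι] (X)

noncomputable def equiangularConst : ℝ := (√(1 ⬝ᵥ ((Xᵀ * X)⁻¹ *ᵥ 1)))⁻¹

noncomputable def equiangularVector : m → ℝ := equiangularConst X • (X *ᵥ ((Xᵀ * X)⁻¹ *ᵥ 1))

variable {X}

theorem transpose_mulVec_equiangularVector (hX : LinearIndependent ℝ Xᵀ) :
    Xᵀ *ᵥ equiangularVector X = equiangularConst X • 1 := by
  have hG : IsUnit (Xᵀ * X).det := (posDef_transpose_mul_self hX).det_pos.ne'.isUnit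
  rw [equiangularVector, mulVec_smul, mulVec_mulVec, mulVec_mulVec, mul_nonsing_inv _ hG,
    one_mulVec]

theorem equiangularVector_dotProduct_mulVec (hX : LinearIndependent ℝ Xᵀ) (v : ι → ℝ) :
    equiangularVector X ⬝ᵥ (X *ᵥ v) = equiangularConst X * (1 ⬝ᵥ v) := by
  rw [dotProduct_mulVec, ← mulVec_transpose, transpose_mulVec_equiangularVector hX,
    smul_dotProduct, smul_eq_mul]

variable [Nonempty ι]

theorem one_dotProduct_inv_transpose_mul_self_mulVec_one_pos (hX : LinearIndependent ℝ Xᵀ) :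
    0 < 1 ⬝ᵥ ((Xᵀ * X)⁻¹ *ᵥ 1) := by
  simpa using (posDef_transpose_mul_self hX).inv.dotProduct_mulVec_pos one_ne_zero

theorem equiangularConst_pos (hX : LinearIndependent ℝ Xᵀ) : 0 < equiangularConst X :=
  inv_pos.2 (Real.sqrt_pos.2 (one_dotProduct_inv_transpose_mul_self_mulVec_one_pos hX))

theorem equiangularVector_dotProduct_self (hX : LinearIndependent ℝ Xᵀ) :
    equiangularVector X ⬝ᵥ equiangularVector X = 1 := by
  have hs := one_dotProduct_inv_transpose_mul_self_mulVec_one_pos hX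
  nth_rewrite 2 [equiangularVector]
  rw [dotProduct_smul, equiangularVector_dotProduct_mulVec hX, smul_eq_mul, ← mul_assoc, ← sq,
    equiangularConst, inv_pow, Real.sq_sqrt hs.le, inv_mul_cancel₀ hs.ne']

end Matrix

theorem stmt17_general (n k : ℕ) (hk : 0 < k)
    (X : Matrix (Fin n) (Fin k) ℝ) (hli : LinearIndependent ℝ X.transpose)
    (y muhat : Fin n → ℝ) (C : ℝ) (hC : 0 < C)
    (hcorr : X.transpose *ᵥ (y - muhat) = C • (1 : Fin k → ℝ))
    (u : Fin n → ℝ) (huu : u ⬝ᵥ u = 1)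
    (hspan : u ∈ Submodule.span ℝ (Set.range X.transpose)) :
    let G : Matrix (Fin k) (Fin k) ℝ := X.transpose * X
    let A : ℝ := (Real.sqrt ((1 : Fin k → ℝ) ⬝ᵥ (G⁻¹ *ᵥ (1 : Fin k → ℝ))))⁻¹
    let uA : Fin n → ℝ := A • (X *ᵥ (G⁻¹ *ᵥ (1 : Fin k → ℝ)))
    HasDerivAt (fun γ : ℝ => (y - (muhat + γ • u)) ⬝ᵥ (y - (muhat + γ • u)))
        (-(2 * C * (uA ⬝ᵥ u) / A)) 0 ∧
      2 * C * (uA ⬝ᵥ u) / A ≤ 2 * C / A ∧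
      2 * C * (uA ⬝ᵥ uA) / A = 2 * C / A := by
  intro G A uA
  rw [show uA = equiangularVector X from rfl, show A = equiangularConst X from rfl]
  have : Nonempty (Fin k) := ⟨⟨0, hk⟩⟩
  have hA := equiangularConst_pos hli
  obtain ⟨v, hv⟩ : u ∈ LinearMap.range X.mulVecLin := by
    rwa [range_mulVecLin]
  obtain rfl : X *ᵥ v = u := hv
  have hslope : 2 * C * (equiangularVector X ⬝ᵥ X *ᵥ v) / equiangularConst X
      = 2 * ((X *ᵥ v) ⬝ᵥ (y - muhat)) := by
    rw [equiangularVector_dotProduct_mulVec hli, dotProduct_comm (X *ᵥ v), dotProduct_mulVec,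
      ← mulVec_transpose, hcorr, smul_dotProduct, smul_eq_mul]
    field_simp
  refine ⟨?_, ?_, ?_⟩
  · rw [hslope]
    simpa [sub_add_eq_sub_sub] using hasDerivAt_dotProduct_self_sub_smul (y - muhat) (X *ᵥ v) 0
  · have hle := dotProduct_le_one_of_dotProduct_self_eq_one (equiangularVector_dotProduct_self hli) huu
    gcongr ?_ / _
    exact mul_le_of_le_one_right (by positivity) hle
  · rw [equiangularVector_dotProduct_self hli, mul_one]

theorem stmt17 (n k : ℕ) (hk : 0 < k)
    (X : Matrix (Fin n) (Fin k) ℝ) (hli : LinearIndependent ℝ X.transpose)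
    (hunit : ∀ j, (fun i => X i j) ⬝ᵥ (fun i => X i j) = 1)
    (y muhat : Fin n → ℝ) (C : ℝ) (hC : 0 < C)
    (hcorr : X.transpose *ᵥ (y - muhat) = C • (1 : Fin k → ℝ))
    (u : Fin n → ℝ) (huu : u ⬝ᵥ u = 1)
    (hspan : u ∈ Submodule.span ℝ (Set.range X.transpose)) :
    let G : Matrix (Fin k) (Fin k) ℝ := X.transpose * X
    let A : ℝ := (Real.sqrt ((1 : Fin k → ℝ) ⬝ᵥ (G⁻¹ *ᵥ (1 : Fin k → ℝ))))⁻¹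
    let uA : Fin n → ℝ := A • (X *ᵥ (G⁻¹ *ᵥ (1 : Fin k → ℝ)))
    HasDerivAt (fun γ : ℝ => (y - (muhat + γ • u)) ⬝ᵥ (y - (muhat + γ • u)))
        (-(2 * C * (uA ⬝ᵥ u) / A)) 0 ∧
      2 * C * (uA ⬝ᵥ u) / A ≤ 2 * C / A ∧
      2 * C * (uA ⬝ᵥ uA) / A = 2 * C / A :=
  stmt17_general n k hk X hli y muhat C hC hcorr u huu hspan
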